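/- arXiv:2511.05071 — 3 statements merged into one kernel-verified Lean document; each statement's English description precedes it below -/
import Mathlib

section
/- Let s = 12, m ≥ 1, and consider the one-sided local trigonometric regression design X_c of size (sm+1) × 12 whose rows for j = 0, 1, ..., sm are (1, cos(πj/6), sin(πj/6), ..., cos(5πj/6), sin(5πj/6), cos(πj)). Let x_0 be its first row (at j = 0). Then the weight vector w_c = X_c (X_c' X_c)^{-1} x_0 has entries w_{cj} = 1/(m+1) for j = 0, 12, 24, ..., 12m and w_{cj} = 0 otherwise. -/
open Real Matrix

/-- The `(12m+1) × 12` one-sided monthly trigonometric design matrix, with rows indexed by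
`j = 0, 1, ..., 12m`, each row being
`(1, cos(πj/6), sin(πj/6), ..., cos(5πj/6), sin(5πj/6), cos(πj))`. -/
noncomputable def XcMonthly (m : ℕ) : Matrix (Fin (12 * m + 1)) (Fin 12) ℝ :=
  fun i c =>
    let j : ℝ := (i.val : ℝ)
    if c.val = 0 then 1
    else if c.val = 11 then Real.cos (π * j)
    else if c.val % 2 = 1 then Real.cos (π * (((c.val + 1) / 2 : ℕ) : ℝ) * j / 6)
    else Real.sin (π * (((c.val / 2 : ℕ)) : ℝ) * j / 6)

/-! The cosine addition formula turns the Dirichlet kernel identity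
`1/12 + (1/6) ∑_{k=1}^{5} cos (π k n / 6) + cos (π n) / 12 = [12 ∣ n]` into
`∑_c f_c s * f_c t / d_c = [12 ∣ s - t]` for integers `s`, `t`, where `f_c` are the twelve
harmonics and `d_c = ∑_{j<12} f_c j ^ 2`. Hence `β_c = f_c 0 / (d_c (m+1))` satisfies `X β = w`
for the claimed weight vector `w`, while periodicity gives `Xᵀ w = x₀`: `β` solves the normal
equations. The first twelve rows of `X` form an invertible matrix, so `XᵀX` is invertible and
`X (XᵀX)⁻¹ x₀ = X β = w`. -/

open Finset Function

theorem Real.sum_range_cos_two_pi_mul_div (N : ℕ) (n : ℤ) :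
    ∑ k ∈ range N, cos (2 * π * n * k / N) = if (N : ℤ) ∣ n then (N : ℝ) else 0 := by
  rcases Nat.eq_zero_or_pos N with rfl | hN
  · simp
  have hN' : (N : ℝ) ≠ 0 := by positivity
  split_ifs with h
  · obtain ⟨q, rfl⟩ := h
    have hterm (k : ℕ) : cos (2 * π * (N * q) * k / N) = 1 := by
      rw [show 2 * π * (N * q) * k / N = ((q * k : ℤ) : ℝ) * (2 * π) by push_cast; field_simp]
      exact cos_int_mul_two_pi _
    simp [hterm]
  · have hsin : sin (2 * π * n / N / 2) ≠ 0 := by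
      rw [Ne, sin_eq_zero_iff]
      rintro ⟨q, hq⟩
      refine h ⟨q, ?_⟩
      have : (n : ℝ) = N * q := by field_simp at hq; linarith [pi_pos]
      exact_mod_cast this
    have key := sin_mul_sum_cos N (2 * π * n / N) 0
    rw [show N * (2 * π * n / N) / 2 = (n : ℝ) * π by field_simp, sin_int_mul_pi,
      zero_mul] at key
    simpa [mul_div_right_comm] using (mul_eq_zero.mp key).resolve_left hsin

theorem Nat.card_filter_dvd_range {k : ℕ} (hk : 0 < k) (m : ℕ) :
    #{e ∈ range (k * m + 1) | k ∣ e} = m + 1 := by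
  have : {e ∈ range (k * m + 1) | k ∣ e} =
      (range (m + 1)).map ⟨(k * ·), mul_right_injective₀ hk.ne'⟩ := by
    ext e
    simp only [mem_filter, mem_range, mem_map, Function.Embedding.coeFn_mk]
    constructor
    · rintro ⟨he, q, rfl⟩
      exact ⟨q, by by_contra! hq; nlinarith, rfl⟩
    · rintro ⟨q, hq, rfl⟩
      exact ⟨by nlinarith, dvd_mul_right k q⟩
  rw [this, card_map, card_range]

theorem Matrix.mulVec_injective_of_submatrix {m n o K : Type*} [Fintype n] [Semiring K]
    {A : Matrix m n K} (e : o → m) (hA : Injective (A.submatrix e id).mulVec) :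
    Injective A.mulVec :=
  Injective.of_comp (f := fun v => v ∘ e) hA

section LeastSquares

variable {m n K : Type*} [Fintype m] [Fintype n] [DecidableEq n] [Field K] [LinearOrder K]
  [IsStrictOrderedRing K] {A : Matrix m n K}

theorem Matrix.isUnit_det_transpose_mul_self (hA : Injective A.mulVec) : IsUnit (Aᵀ * A).det := by
  have hinj : Injective (Aᵀ * A).mulVecLin := by
    rw [← LinearMap.ker_eq_bot, ker_mulVecLin_transpose_mul_self, LinearMap.ker_eq_bot]
    exact hA
  exact (isUnit_iff_isUnit_det _).mp (mulVec_injective_iff_isUnit.mp hinj)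

theorem Matrix.inv_transpose_mul_self_mulVec_transpose_mulVec (hA : Injective A.mulVec)
    (v : n → K) : (Aᵀ * A)⁻¹ *ᵥ (Aᵀ *ᵥ (A *ᵥ v)) = v := by
  rw [mulVec_mulVec, mulVec_mulVec, Matrix.mul_assoc,
    nonsing_inv_mul _ (isUnit_det_transpose_mul_self hA), one_mulVec]

end LeastSquares

noncomputable def monthlyHarmonic (c : Fin 12) (t : ℝ) : ℝ :=
  if c.val = 0 then 1
  else if c.val = 11 then cos (π * t)
  else if c.val % 2 = 1 then cos (π * (((c.val + 1) / 2 : ℕ) : ℝ) * t / 6)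
  else sin (π * ((c.val / 2 : ℕ) : ℝ) * t / 6)

theorem XcMonthly_apply (m : ℕ) (i : Fin (12 * m + 1)) (c : Fin 12) :
    XcMonthly m i c = monthlyHarmonic c i := rfl

theorem monthlyHarmonic_periodic (c : Fin 12) : Periodic (monthlyHarmonic c) 12 := by
  have shift (k : ℕ) (t : ℝ) : π * k * (t + 12) / 6 = π * k * t / 6 + k * (2 * π) := by ring
  intro t
  unfold monthlyHarmonic
  split_ifs
  · rfl
  · rw [show π * (t + 12) = π * t + (6 : ℕ) * (2 * π) by push_cast; ring, cos_add_nat_mul_two_pi]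
  · rw [shift, cos_add_nat_mul_two_pi]
  · rw [shift, sin_add_nat_mul_two_pi]

/-- `∑ j < 12, monthlyHarmonic c j ^ 2` -/
def monthlyHarmonicSqNorm (c : Fin 12) : ℝ := if c.val = 0 ∨ c.val = 11 then 12 else 6

noncomputable def monthlyKernel (s t : ℝ) : ℝ :=
  ∑ c, monthlyHarmonic c s * monthlyHarmonic c t / monthlyHarmonicSqNorm c

theorem monthlyKernel_intCast_zero (n : ℤ) :
    monthlyKernel n 0 = if 12 ∣ n then 1 else 0 := by
  have h := sum_range_cos_two_pi_mul_div 12 n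
  have mirror (k : ℝ) : cos (2 * π * n * (12 - k) / 12) = cos (2 * π * n * k / 12) := by
    rw [show 2 * π * n * (12 - k) / 12 = n * (2 * π) - 2 * π * n * k / 12 by ring]
    exact cos_int_mul_two_pi_sub _ _
  have m1 := mirror 1
  have m2 := mirror 2
  have m3 := mirror 3
  have m4 := mirror 4
  have m5 := mirror 5
  simp only [sum_range_succ, sum_range_zero] at h
  simp only [monthlyKernel, Fin.sum_univ_succ, monthlyHarmonic, monthlyHarmonicSqNorm]
  norm_num at h m1 m2 m3 m4 m5 ⊢
  ring_nf at h m1 m2 m3 m4 m5 ⊢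
  split_ifs at h ⊢ <;> linear_combination h / 12 - (m1 + m2 + m3 + m4 + m5) / 12

theorem monthlyKernel_intCast (s t : ℤ) :
    monthlyKernel s t = if 12 ∣ s - t then 1 else 0 := by
  rw [← monthlyKernel_intCast_zero, Int.cast_sub]
  have hsub (k : ℝ) : cos (π * k * (s - t) / 6) =
      cos (π * k * s / 6) * cos (π * k * t / 6) + sin (π * k * s / 6) * sin (π * k * t / 6) := by
    rw [← cos_sub]; ring_nf
  have h6 : cos (π * (s - t)) = cos (π * s) * cos (π * t) := by
    rw [mul_sub, cos_sub, mul_comm π s, sin_int_mul_pi]; ring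
  have h1 := hsub 1
  have h2 := hsub 2
  have h3 := hsub 3
  have h4 := hsub 4
  have h5 := hsub 5
  simp only [monthlyKernel, Fin.sum_univ_succ, monthlyHarmonic, monthlyHarmonicSqNorm]
  norm_num at h1 h2 h3 h4 h5 ⊢
  ring_nf at h1 h2 h3 h4 h5 h6 ⊢
  linear_combination -(h1 + h2 + h3 + h4 + h5) / 6 - h6 / 12

noncomputable def monthlyHarmonicMatrix : Matrix (Fin 12) (Fin 12) ℝ :=
  fun j c => monthlyHarmonic c j

theorem isUnit_monthlyHarmonicMatrix : IsUnit monthlyHarmonicMatrix := by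
  refine (isUnit_iff_isUnit_det _).mpr (isUnit_det_of_right_inverse
    (B := of fun c j => monthlyHarmonic c j / monthlyHarmonicSqNorm c) ?_)
  ext j j'
  rw [mul_apply, one_apply]
  have hK := monthlyKernel_intCast j j'
  have hdvd : (12 : ℤ) ∣ (j : ℤ) - j' ↔ j = j' := by
    refine ⟨fun h => Fin.ext ?_, fun h => by simp [h]⟩
    omega
  push_cast at hK
  simpa [monthlyHarmonicMatrix, of_apply, monthlyKernel, mul_div_assoc, hdvd] using hK

theorem XcMonthly_mulVec_injective {m : ℕ} (hm : 1 ≤ m) : Injective (XcMonthly m).mulVec :=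
  Matrix.mulVec_injective_of_submatrix (Fin.castLE (by omega : 12 ≤ 12 * m + 1))
    (mulVec_injective_iff_isUnit.mpr isUnit_monthlyHarmonicMatrix)

noncomputable def climateNormalCoeffs (m : ℕ) (c : Fin 12) : ℝ :=
  monthlyHarmonic c 0 / (monthlyHarmonicSqNorm c * (m + 1))

theorem XcMonthly_mulVec_climateNormalCoeffs (m : ℕ) (i : Fin (12 * m + 1)) :
    (XcMonthly m *ᵥ climateNormalCoeffs m) i = if 12 ∣ i.val then 1 / ((m : ℝ) + 1) else 0 := by
  have hK := monthlyKernel_intCast i 0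
  simp only [sub_zero, Int.cast_zero, Int.cast_natCast] at hK
  norm_cast at hK
  calc (XcMonthly m *ᵥ climateNormalCoeffs m) i = monthlyKernel i 0 / (m + 1) := by
        simp only [mulVec, dotProduct, XcMonthly_apply, climateNormalCoeffs, monthlyKernel, sum_div]
        refine sum_congr rfl fun c _ => ?_
        field_simp
    _ = _ := by rw [hK]; split_ifs <;> simp

theorem XcMonthly_transpose_mulVec_weights (m : ℕ) :
    (XcMonthly m)ᵀ *ᵥ (fun i => if 12 ∣ i.val then 1 / ((m : ℝ) + 1) else 0) = XcMonthly m 0 := by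
  ext c
  have hperiodic (i : Fin (12 * m + 1)) (hi : 12 ∣ i.val) :
      XcMonthly m i c = XcMonthly m 0 c := by
    obtain ⟨q, hq⟩ := hi
    simpa [XcMonthly_apply, hq, mul_comm] using (monthlyHarmonic_periodic c).nat_mul_eq q
  calc ((XcMonthly m)ᵀ *ᵥ fun i => if 12 ∣ i.val then 1 / ((m : ℝ) + 1) else 0) c
      = ∑ i : Fin (12 * m + 1), if 12 ∣ i.val then XcMonthly m 0 c / (m + 1) else 0 := by
        simp only [mulVec, dotProduct, transpose_apply]
        refine sum_congr rfl fun i _ => ?_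
        split_ifs with hi
        · rw [hperiodic i hi, mul_one_div]
        · rw [mul_zero]
    _ = XcMonthly m 0 c := by
        rw [Fin.sum_univ_eq_sum_range (fun i => if 12 ∣ i then XcMonthly m 0 c / (m + 1) else 0),
          sum_ite, sum_const_zero, add_zero, sum_const, Nat.card_filter_dvd_range (by norm_num),
          nsmul_eq_mul]
        push_cast
        field_simp

theorem one_sided_climate_normal_filter (m : ℕ) (hm : 1 ≤ m) :
    let Xc := XcMonthly m
    let x0 : Fin 12 → ℝ := Xc 0
    let wc : Fin (12 * m + 1) → ℝ := Xc *ᵥ ((Xcᵀ * Xc)⁻¹ *ᵥ x0)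
    ∀ i : Fin (12 * m + 1),
      wc i = if 12 ∣ i.val then 1 / ((m : ℝ) + 1) else 0 := by
  intro Xc x0 wc i
  have hfit :
      Xc *ᵥ climateNormalCoeffs m = fun i => if 12 ∣ i.val then 1 / ((m : ℝ) + 1) else 0 :=
    funext (XcMonthly_mulVec_climateNormalCoeffs m)
  have hnormal : Xcᵀ *ᵥ (Xc *ᵥ climateNormalCoeffs m) = x0 := by
    rw [hfit]; exact XcMonthly_transpose_mulVec_weights m
  change (Xc *ᵥ ((Xcᵀ * Xc)⁻¹ *ᵥ x0)) i = _
  rw [← hnormal, inv_transpose_mul_self_mulVec_transpose_mulVec (XcMonthly_mulVec_injective hm)]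
  exact XcMonthly_mulVec_climateNormalCoeffs m i
end

section
/- For d = 2 and half-bandwidth m ≥ 1, the vector κ₂ = Σ₂^{-1} 𝟙, where Σ₂ is the (2m+1) × (2m+1) symmetric banded Toeplitz matrix with diagonal 6, first off-diagonals −4, and second off-diagonals 1, has entries proportional to [(m+1)² − j²][(m+2)² − j²] for j = −m, ..., m. -/
open Matrix

namespace BiweightKernelAux

noncomputable def V (m : ℕ) (x : ℤ) : ℝ :=
  (((m:ℝ)+1)^2 - ((x:ℝ)-m)^2) * (((m:ℝ)+2)^2 - ((x:ℝ)-m)^2) / 24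

lemma V_zero (m : ℕ) (a : ℤ) (h : a = -1 ∨ a = -2 ∨ a = 2*m+1 ∨ a = 2*m+2) :
    V m a = 0 := by
  rcases h with h | h | h | h <;> subst h <;> unfold V <;> push_cast <;> ring

lemma dsum (n : ℕ) (a : ℤ) (c : ℝ) :
    ∑ k : Fin n, (if ((k:ℕ):ℤ) = a then c else 0) = if 0 ≤ a ∧ a < n then c else 0 := by
  by_cases h : 0 ≤ a ∧ a < n
  · rw [if_pos h]
    have ha : a.toNat < n := by omega
    rw [Finset.sum_eq_single (⟨a.toNat, ha⟩ : Fin n)]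
    · rw [if_pos (show (((a.toNat : ℕ) : ℤ)) = a by omega)]
    · intro b _ hb
      rw [if_neg]
      intro hc
      exact hb (Fin.ext (show b.val = a.toNat by omega))
    · simp
  · rw [if_neg h, Finset.sum_eq_zero]
    intro k _
    have := k.isLt
    rw [if_neg]
    omega

lemma dsumN (n a : ℕ) (c : ℝ) :
    ∑ k : Fin n, (if (k:ℕ) = a then c else 0) = if a < n then c else 0 := by
  by_cases h : a < n
  · rw [if_pos h]
    rw [Finset.sum_eq_single (⟨a, h⟩ : Fin n)]
    · simp
    · intro b _ hb
      rw [if_neg]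
      intro hc
      exact hb (Fin.ext (show b.val = a from hc))
    · simp
  · rw [if_neg h, Finset.sum_eq_zero]
    intro k _
    have := k.isLt
    rw [if_neg]
    omega



def S (m : ℕ) : Matrix (Fin (2 * m + 1)) (Fin (2 * m + 1)) ℝ :=
  fun i j =>
    if i = j then 6
    else if ((i.val : ℤ) - j.val).natAbs = 1 then -4
    else if ((i.val : ℤ) - j.val).natAbs = 2 then 1
    else 0

def Bm (m : ℕ) : Matrix (Fin (2 * m + 3)) (Fin (2 * m + 1)) ℝ :=
  fun t j =>
    if (t : ℕ) = (j : ℕ) then 1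
    else if (t : ℕ) = (j : ℕ) + 1 then -2
    else if (t : ℕ) = (j : ℕ) + 2 then 1
    else 0

lemma BtB (m : ℕ) : (Bm m)ᵀ * Bm m = S m := by
  ext i j
  have hi := i.isLt
  have hj := j.isLt
  rw [Matrix.mul_apply]
  have key : ∀ t : Fin (2 * m + 3), (Bm m)ᵀ i t * Bm m t j =
      (if (t:ℕ) = (i:ℕ) then (if (i:ℕ) = (j:ℕ) then (1:ℝ) else if (i:ℕ) = (j:ℕ)+1 then -2
          else if (i:ℕ) = (j:ℕ)+2 then 1 else 0) else 0)
    + (if (t:ℕ) = (i:ℕ)+1 then (-2) * (if (i:ℕ)+1 = (j:ℕ) then (1:ℝ)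
          else if (i:ℕ)+1 = (j:ℕ)+1 then -2 else if (i:ℕ)+1 = (j:ℕ)+2 then 1 else 0) else 0)
    + (if (t:ℕ) = (i:ℕ)+2 then (if (i:ℕ)+2 = (j:ℕ) then (1:ℝ)
          else if (i:ℕ)+2 = (j:ℕ)+1 then -2 else if (i:ℕ)+2 = (j:ℕ)+2 then 1 else 0) else 0) := by
    intro t
    rw [Matrix.transpose_apply]
    unfold Bm
    by_cases h0 : (t:ℕ) = (i:ℕ)
    · rw [if_pos h0, if_pos h0,
        if_neg (show ¬(t:ℕ) = (i:ℕ)+1 by omega),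
        if_neg (show ¬(t:ℕ) = (i:ℕ)+2 by omega), h0]
      ring
    · by_cases h1 : (t:ℕ) = (i:ℕ) + 1
      · rw [if_neg h0, if_pos h1, if_neg h0, if_pos h1,
          if_neg (show ¬(t:ℕ) = (i:ℕ)+2 by omega), h1]
        ring
      · by_cases h2 : (t:ℕ) = (i:ℕ) + 2
        · rw [if_neg h0, if_neg h1, if_pos h2, if_neg h0, if_neg h1, if_pos h2, h2]
          ring
        · rw [if_neg h0, if_neg h1, if_neg h2, if_neg h0, if_neg h1, if_neg h2]
          ring
  rw [Finset.sum_congr rfl (fun t _ => key t)]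
  rw [Finset.sum_add_distrib, Finset.sum_add_distrib, dsumN, dsumN, dsumN]
  rw [if_pos (show (i:ℕ) < 2*m+3 by omega), if_pos (show (i:ℕ)+1 < 2*m+3 by omega),
    if_pos (show (i:ℕ)+2 < 2*m+3 by omega)]
  unfold S
  have hc : (i:ℕ) = (j:ℕ) ∨ (i:ℕ) = (j:ℕ)+1 ∨ (i:ℕ)+1 = (j:ℕ) ∨ (i:ℕ) = (j:ℕ)+2
      ∨ (i:ℕ)+2 = (j:ℕ) ∨ ((((i:ℕ):ℤ) - ((j:ℕ):ℤ)).natAbs ≥ 3) := by omega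
  rcases hc with h | h | h | h | h | h
  · rw [if_pos h,
      if_neg (show ¬(i:ℕ)+1 = (j:ℕ) by omega),
      if_pos (show (i:ℕ)+1 = (j:ℕ)+1 by omega),
      if_neg (show ¬(i:ℕ)+2 = (j:ℕ) by omega),
      if_neg (show ¬(i:ℕ)+2 = (j:ℕ)+1 by omega),
      if_pos (show (i:ℕ)+2 = (j:ℕ)+2 by omega),
      if_pos (Fin.ext h)]
    norm_num
  · rw [if_neg (show ¬(i:ℕ) = (j:ℕ) by omega),
      if_pos h,
      if_neg (show ¬(i:ℕ)+1 = (j:ℕ) by omega),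
      if_neg (show ¬(i:ℕ)+1 = (j:ℕ)+1 by omega),
      if_pos (show (i:ℕ)+1 = (j:ℕ)+2 by omega),
      if_neg (show ¬(i:ℕ)+2 = (j:ℕ) by omega),
      if_neg (show ¬(i:ℕ)+2 = (j:ℕ)+1 by omega),
      if_neg (show ¬(i:ℕ)+2 = (j:ℕ)+2 by omega),
      if_neg (show ¬i = j from fun hh => by rw [hh] at h; omega),
      if_pos (show ((((i:ℕ):ℤ) - ((j:ℕ):ℤ)).natAbs = 1) by omega)]
    norm_num
  · rw [if_neg (show ¬(i:ℕ) = (j:ℕ) by omega),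
      if_neg (show ¬(i:ℕ) = (j:ℕ)+1 by omega),
      if_neg (show ¬(i:ℕ) = (j:ℕ)+2 by omega),
      if_pos h,
      if_neg (show ¬(i:ℕ)+2 = (j:ℕ) by omega),
      if_pos (show (i:ℕ)+2 = (j:ℕ)+1 by omega),
      if_neg (show ¬i = j from fun hh => by rw [hh] at h; omega),
      if_pos (show ((((i:ℕ):ℤ) - ((j:ℕ):ℤ)).natAbs = 1) by omega)]
    norm_num
  · rw [if_neg (show ¬(i:ℕ) = (j:ℕ) by omega),
      if_neg (show ¬(i:ℕ) = (j:ℕ)+1 by omega),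
      if_pos h,
      if_neg (show ¬(i:ℕ)+1 = (j:ℕ) by omega),
      if_neg (show ¬(i:ℕ)+1 = (j:ℕ)+1 by omega),
      if_neg (show ¬(i:ℕ)+1 = (j:ℕ)+2 by omega),
      if_neg (show ¬(i:ℕ)+2 = (j:ℕ) by omega),
      if_neg (show ¬(i:ℕ)+2 = (j:ℕ)+1 by omega),
      if_neg (show ¬(i:ℕ)+2 = (j:ℕ)+2 by omega),
      if_neg (show ¬i = j from fun hh => by rw [hh] at h; omega),
      if_neg (show ¬((((i:ℕ):ℤ) - ((j:ℕ):ℤ)).natAbs = 1) by omega),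
      if_pos (show ((((i:ℕ):ℤ) - ((j:ℕ):ℤ)).natAbs = 2) by omega)]
    norm_num
  · rw [if_neg (show ¬(i:ℕ) = (j:ℕ) by omega),
      if_neg (show ¬(i:ℕ) = (j:ℕ)+1 by omega),
      if_neg (show ¬(i:ℕ) = (j:ℕ)+2 by omega),
      if_neg (show ¬(i:ℕ)+1 = (j:ℕ) by omega),
      if_neg (show ¬(i:ℕ)+1 = (j:ℕ)+1 by omega),
      if_neg (show ¬(i:ℕ)+1 = (j:ℕ)+2 by omega),
      if_pos h,
      if_neg (show ¬i = j from fun hh => by rw [hh] at h; omega),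
      if_neg (show ¬((((i:ℕ):ℤ) - ((j:ℕ):ℤ)).natAbs = 1) by omega),
      if_pos (show ((((i:ℕ):ℤ) - ((j:ℕ):ℤ)).natAbs = 2) by omega)]
    norm_num
  · rw [if_neg (show ¬(i:ℕ) = (j:ℕ) by omega),
      if_neg (show ¬(i:ℕ) = (j:ℕ)+1 by omega),
      if_neg (show ¬(i:ℕ) = (j:ℕ)+2 by omega),
      if_neg (show ¬(i:ℕ)+1 = (j:ℕ) by omega),
      if_neg (show ¬(i:ℕ)+1 = (j:ℕ)+1 by omega),
      if_neg (show ¬(i:ℕ)+1 = (j:ℕ)+2 by omega),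
      if_neg (show ¬(i:ℕ)+2 = (j:ℕ) by omega),
      if_neg (show ¬(i:ℕ)+2 = (j:ℕ)+1 by omega),
      if_neg (show ¬(i:ℕ)+2 = (j:ℕ)+2 by omega),
      if_neg (show ¬i = j from fun hh => by rw [hh] at h; omega),
      if_neg (show ¬((((i:ℕ):ℤ) - ((j:ℕ):ℤ)).natAbs = 1) by omega),
      if_neg (show ¬((((i:ℕ):ℤ) - ((j:ℕ):ℤ)).natAbs = 2) by omega)]
    norm_num

lemma S_row (m : ℕ) :
    S m *ᵥ (fun k : Fin (2*m+1) => V m (k:ℕ)) = fun _ => 1 := by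
  funext i
  have hi := i.isLt
  rw [Matrix.mulVec, dotProduct]
  have key : ∀ k : Fin (2*m+1), S m i k * V m (k:ℕ) =
      (if ((k:ℕ):ℤ) = ((i:ℕ):ℤ) then 6 * V m ((i:ℕ):ℤ) else 0)
    + (if ((k:ℕ):ℤ) = ((i:ℕ):ℤ)-1 then -4 * V m (((i:ℕ):ℤ)-1) else 0)
    + (if ((k:ℕ):ℤ) = ((i:ℕ):ℤ)+1 then -4 * V m (((i:ℕ):ℤ)+1) else 0)
    + (if ((k:ℕ):ℤ) = ((i:ℕ):ℤ)-2 then V m (((i:ℕ):ℤ)-2) else 0)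
    + (if ((k:ℕ):ℤ) = ((i:ℕ):ℤ)+2 then V m (((i:ℕ):ℤ)+2) else 0) := by
    intro k
    unfold S
    by_cases h0 : ((k:ℕ):ℤ) = ((i:ℕ):ℤ)
    · rw [if_pos (show i = k from Fin.ext (by omega)), if_pos h0,
        if_neg (show ¬((k:ℕ):ℤ) = ((i:ℕ):ℤ)-1 by omega),
        if_neg (show ¬((k:ℕ):ℤ) = ((i:ℕ):ℤ)+1 by omega),
        if_neg (show ¬((k:ℕ):ℤ) = ((i:ℕ):ℤ)-2 by omega),
        if_neg (show ¬((k:ℕ):ℤ) = ((i:ℕ):ℤ)+2 by omega), h0]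
      ring
    · by_cases h1 : ((k:ℕ):ℤ) = ((i:ℕ):ℤ)-1
      · rw [if_neg (show ¬i = k from fun hh => by rw [hh] at h1; omega),
          if_pos (show (((i:ℕ):ℤ) - ((k:ℕ):ℤ)).natAbs = 1 by omega),
          if_neg h0, if_pos h1,
          if_neg (show ¬((k:ℕ):ℤ) = ((i:ℕ):ℤ)+1 by omega),
          if_neg (show ¬((k:ℕ):ℤ) = ((i:ℕ):ℤ)-2 by omega),
          if_neg (show ¬((k:ℕ):ℤ) = ((i:ℕ):ℤ)+2 by omega), h1]
        ring
      · by_cases h2 : ((k:ℕ):ℤ) = ((i:ℕ):ℤ)+1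
        · rw [if_neg (show ¬i = k from fun hh => by rw [hh] at h2; omega),
            if_pos (show (((i:ℕ):ℤ) - ((k:ℕ):ℤ)).natAbs = 1 by omega),
            if_neg h0, if_neg h1, if_pos h2,
            if_neg (show ¬((k:ℕ):ℤ) = ((i:ℕ):ℤ)-2 by omega),
            if_neg (show ¬((k:ℕ):ℤ) = ((i:ℕ):ℤ)+2 by omega), h2]
          ring
        · by_cases h3 : ((k:ℕ):ℤ) = ((i:ℕ):ℤ)-2
          · rw [if_neg (show ¬i = k from fun hh => by rw [hh] at h3; omega),
              if_neg (show ¬(((i:ℕ):ℤ) - ((k:ℕ):ℤ)).natAbs = 1 by omega),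
              if_pos (show (((i:ℕ):ℤ) - ((k:ℕ):ℤ)).natAbs = 2 by omega),
              if_neg h0, if_neg h1, if_neg h2, if_pos h3,
              if_neg (show ¬((k:ℕ):ℤ) = ((i:ℕ):ℤ)+2 by omega), h3]
            ring
          · by_cases h4 : ((k:ℕ):ℤ) = ((i:ℕ):ℤ)+2
            · rw [if_neg (show ¬i = k from fun hh => by rw [hh] at h4; omega),
                if_neg (show ¬(((i:ℕ):ℤ) - ((k:ℕ):ℤ)).natAbs = 1 by omega),
                if_pos (show (((i:ℕ):ℤ) - ((k:ℕ):ℤ)).natAbs = 2 by omega),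
                if_neg h0, if_neg h1, if_neg h2, if_neg h3, if_pos h4, h4]
              ring
            · rw [if_neg (show ¬i = k from fun hh => by rw [hh] at h0; omega),
                if_neg (show ¬(((i:ℕ):ℤ) - ((k:ℕ):ℤ)).natAbs = 1 by omega),
                if_neg (show ¬(((i:ℕ):ℤ) - ((k:ℕ):ℤ)).natAbs = 2 by omega),
                if_neg h0, if_neg h1, if_neg h2, if_neg h3, if_neg h4]
              ring
  rw [Finset.sum_congr rfl (fun k _ => key k)]
  rw [Finset.sum_add_distrib, Finset.sum_add_distrib, Finset.sum_add_distrib,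
    Finset.sum_add_distrib, dsum, dsum, dsum, dsum, dsum]
  have e0 : (if 0 ≤ ((i:ℕ):ℤ) ∧ ((i:ℕ):ℤ) < ((2*m+1:ℕ):ℤ) then 6 * V m ((i:ℕ):ℤ) else 0)
      = 6 * V m ((i:ℕ):ℤ) := if_pos (by omega)
  have e1 : (if 0 ≤ ((i:ℕ):ℤ)-1 ∧ ((i:ℕ):ℤ)-1 < ((2*m+1:ℕ):ℤ) then -4 * V m (((i:ℕ):ℤ)-1) else 0)
      = -4 * V m (((i:ℕ):ℤ)-1) := by
    split_ifs with h
    · rfl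
    · rw [V_zero m _ (by omega)]; ring
  have e2 : (if 0 ≤ ((i:ℕ):ℤ)+1 ∧ ((i:ℕ):ℤ)+1 < ((2*m+1:ℕ):ℤ) then -4 * V m (((i:ℕ):ℤ)+1) else 0)
      = -4 * V m (((i:ℕ):ℤ)+1) := by
    split_ifs with h
    · rfl
    · rw [V_zero m _ (by omega)]; ring
  have e3 : (if 0 ≤ ((i:ℕ):ℤ)-2 ∧ ((i:ℕ):ℤ)-2 < ((2*m+1:ℕ):ℤ) then V m (((i:ℕ):ℤ)-2) else 0)
      = V m (((i:ℕ):ℤ)-2) := by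
    split_ifs with h
    · rfl
    · rw [V_zero m _ (by omega)]
  have e4 : (if 0 ≤ ((i:ℕ):ℤ)+2 ∧ ((i:ℕ):ℤ)+2 < ((2*m+1:ℕ):ℤ) then V m (((i:ℕ):ℤ)+2) else 0)
      = V m (((i:ℕ):ℤ)+2) := by
    split_ifs with h
    · rfl
    · rw [V_zero m _ (by omega)]
  rw [e0, e1, e2, e3, e4]
  unfold V
  push_cast
  ring


noncomputable def Xe (m : ℕ) (x : Fin (2*m+1) → ℝ) (a : ℤ) : ℝ :=
  if h : 0 ≤ a ∧ a < 2*m+1 then x ⟨a.toNat, by omega⟩ else 0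

lemma Xe_out (m : ℕ) (x : Fin (2*m+1) → ℝ) (a : ℤ) (h : ¬(0 ≤ a ∧ a < 2*m+1)) :
    Xe m x a = 0 := dif_neg h

lemma Xe_in (m : ℕ) (x : Fin (2*m+1) → ℝ) (j : Fin (2*m+1)) :
    x j = Xe m x ((j:ℕ):ℤ) := by
  have hj := j.isLt
  rw [Xe, dif_pos (show 0 ≤ ((j:ℕ):ℤ) ∧ ((j:ℕ):ℤ) < 2*m+1 by omega)]
  congr 1

lemma S_mulVec_eq_zero (m : ℕ) (x : Fin (2*m+1) → ℝ) (hx : S m *ᵥ x = 0) : x = 0 := by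
  have hq : (Bm m *ᵥ x) ⬝ᵥ (Bm m *ᵥ x) = 0 := by
    calc (Bm m *ᵥ x) ⬝ᵥ (Bm m *ᵥ x)
        = (x ᵥ* (Bm m)ᵀ) ⬝ᵥ (Bm m *ᵥ x) := by rw [Matrix.vecMul_transpose]
      _ = x ⬝ᵥ ((Bm m)ᵀ *ᵥ (Bm m *ᵥ x)) := (Matrix.dotProduct_mulVec _ _ _).symm
      _ = x ⬝ᵥ (((Bm m)ᵀ * Bm m) *ᵥ x) := by rw [Matrix.mulVec_mulVec]
      _ = x ⬝ᵥ (S m *ᵥ x) := by rw [BtB]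
      _ = x ⬝ᵥ (0 : Fin (2*m+1) → ℝ) := by rw [hx]
      _ = 0 := dotProduct_zero x
  have hy : ∀ t : Fin (2*m+3), (Bm m *ᵥ x) t = 0 := by
    intro t
    have h1 : ∀ s : Fin (2*m+3), s ∈ Finset.univ → (0:ℝ) ≤ (Bm m *ᵥ x) s * (Bm m *ᵥ x) s :=
      fun s _ => mul_self_nonneg _
    have := (Finset.sum_eq_zero_iff_of_nonneg h1).mp hq t (Finset.mem_univ t)
    exact mul_self_eq_zero.mp this
  have hEt : ∀ t : Fin (2*m+3),
      Xe m x ((t:ℕ):ℤ) + (-2) * Xe m x (((t:ℕ):ℤ)-1) + Xe m x (((t:ℕ):ℤ)-2) = 0 := by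
    intro t
    have h := hy t
    rw [Matrix.mulVec, dotProduct] at h
    have key : ∀ j : Fin (2*m+1), Bm m t j * x j =
        (if ((j:ℕ):ℤ) = ((t:ℕ):ℤ) then Xe m x ((t:ℕ):ℤ) else 0)
      + (if ((j:ℕ):ℤ) = ((t:ℕ):ℤ)-1 then -2 * Xe m x (((t:ℕ):ℤ)-1) else 0)
      + (if ((j:ℕ):ℤ) = ((t:ℕ):ℤ)-2 then Xe m x (((t:ℕ):ℤ)-2) else 0) := by
      intro j
      unfold Bm
      by_cases h0 : ((j:ℕ):ℤ) = ((t:ℕ):ℤ)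
      · rw [if_pos (show (t:ℕ) = (j:ℕ) by omega), if_pos h0,
          if_neg (show ¬((j:ℕ):ℤ) = ((t:ℕ):ℤ)-1 by omega),
          if_neg (show ¬((j:ℕ):ℤ) = ((t:ℕ):ℤ)-2 by omega), Xe_in m x j, h0]
        ring
      · by_cases h1 : ((j:ℕ):ℤ) = ((t:ℕ):ℤ)-1
        · rw [if_neg (show ¬(t:ℕ) = (j:ℕ) by omega),
            if_pos (show (t:ℕ) = (j:ℕ)+1 by omega),
            if_neg h0, if_pos h1,
            if_neg (show ¬((j:ℕ):ℤ) = ((t:ℕ):ℤ)-2 by omega), Xe_in m x j, h1]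
          ring
        · by_cases h2 : ((j:ℕ):ℤ) = ((t:ℕ):ℤ)-2
          · rw [if_neg (show ¬(t:ℕ) = (j:ℕ) by omega),
              if_neg (show ¬(t:ℕ) = (j:ℕ)+1 by omega),
              if_pos (show (t:ℕ) = (j:ℕ)+2 by omega),
              if_neg h0, if_neg h1, if_pos h2, Xe_in m x j, h2]
            ring
          · rw [if_neg (show ¬(t:ℕ) = (j:ℕ) by omega),
              if_neg (show ¬(t:ℕ) = (j:ℕ)+1 by omega),
              if_neg (show ¬(t:ℕ) = (j:ℕ)+2 by omega),
              if_neg h0, if_neg h1, if_neg h2]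
            ring
    rw [Finset.sum_congr rfl (fun j _ => key j), Finset.sum_add_distrib,
      Finset.sum_add_distrib, dsum, dsum, dsum] at h
    have e0 : (if 0 ≤ ((t:ℕ):ℤ) ∧ ((t:ℕ):ℤ) < ((2*m+1:ℕ):ℤ) then Xe m x ((t:ℕ):ℤ) else 0)
        = Xe m x ((t:ℕ):ℤ) := by
      split_ifs with hh
      · rfl
      · rw [Xe_out m x _ (by omega)]
    have e1 : (if 0 ≤ ((t:ℕ):ℤ)-1 ∧ ((t:ℕ):ℤ)-1 < ((2*m+1:ℕ):ℤ) then
          -2 * Xe m x (((t:ℕ):ℤ)-1) else 0) = -2 * Xe m x (((t:ℕ):ℤ)-1) := by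
      split_ifs with hh
      · rfl
      · rw [Xe_out m x _ (by omega)]; ring
    have e2 : (if 0 ≤ ((t:ℕ):ℤ)-2 ∧ ((t:ℕ):ℤ)-2 < ((2*m+1:ℕ):ℤ) then
          Xe m x (((t:ℕ):ℤ)-2) else 0) = Xe m x (((t:ℕ):ℤ)-2) := by
      split_ifs with hh
      · rfl
      · rw [Xe_out m x _ (by omega)]
    rw [e0, e1, e2] at h
    linarith [h]
  have hz : ∀ k : ℕ, Xe m x (k:ℤ) = 0 := by
    intro k
    induction k using Nat.strong_induction_on with
    | _ k ih =>
      by_cases hk : k < 2*m+1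
      · have e := hEt ⟨k, by omega⟩
        have e' : Xe m x (k:ℤ) + (-2) * Xe m x ((k:ℤ)-1) + Xe m x ((k:ℤ)-2) = 0 := e
        have u1 : Xe m x ((k:ℤ)-1) = 0 := by
          rcases Nat.eq_zero_or_pos k with h | h
          · subst h; exact Xe_out m x _ (by omega)
          · rw [show ((k:ℤ)-1) = ((k-1:ℕ):ℤ) by omega]
            exact ih (k-1) (by omega)
        have u2 : Xe m x ((k:ℤ)-2) = 0 := by
          by_cases h : 2 ≤ k
          · rw [show ((k:ℤ)-2) = ((k-2:ℕ):ℤ) by omega]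
            exact ih (k-2) (by omega)
          · exact Xe_out m x _ (by omega)
        linarith [e']
      · exact Xe_out m x _ (by omega)
  funext j
  rw [Xe_in m x j]
  exact hz (j:ℕ)

lemma S_det_ne (m : ℕ) : (S m).det ≠ 0 := by
  intro hdet
  obtain ⟨v, hv, hv0⟩ := (Matrix.exists_mulVec_eq_zero_iff).mpr hdet
  exact hv (S_mulVec_eq_zero m v hv0)


end BiweightKernelAux

open BiweightKernelAux in
/-- The discrete biweight kernel as the row sums of the precision matrix of the
non-invertible MA(2) process: the entries of `κ₂ = Σ₂⁻¹ 𝟙`, where `Σ₂` is the banded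
Toeplitz matrix with diagonal 6, first off-diagonals -4 and second off-diagonals 1, are
proportional to `[(m+1)² - j²][(m+2)² - j²]`, `j = -m, ..., m`. -/
theorem biweight_kernel (m : ℕ) (hm : 1 ≤ m) :
    let Sig2 : Matrix (Fin (2 * m + 1)) (Fin (2 * m + 1)) ℝ :=
      fun i j =>
        if i = j then 6
        else if ((i.val : ℤ) - j.val).natAbs = 1 then -4
        else if ((i.val : ℤ) - j.val).natAbs = 2 then 1
        else 0
    let kap2 : Fin (2 * m + 1) → ℝ := Sig2⁻¹ *ᵥ (fun _ => 1)
    ∃ c : ℝ, c ≠ 0 ∧ ∀ i : Fin (2 * m + 1),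
      kap2 i = c * ((((m : ℝ) + 1) ^ 2 - ((i.val : ℝ) - m) ^ 2)
                      * (((m : ℝ) + 2) ^ 2 - ((i.val : ℝ) - m) ^ 2)) := by
  intro Sig2 kap2
  refine ⟨1/24, by norm_num, fun i => ?_⟩
  have hS : Sig2 = S m := rfl
  have hdet : IsUnit (S m).det := isUnit_iff_ne_zero.mpr (S_det_ne m)
  have hk : kap2 = fun k : Fin (2*m+1) => V m ((k:ℕ):ℤ) := by
    show Sig2⁻¹ *ᵥ (fun _ => 1) = _
    rw [hS, ← S_row m, Matrix.mulVec_mulVec, Matrix.nonsing_inv_mul _ hdet,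
      Matrix.one_mulVec]
  rw [hk]
  show V m ((i:ℕ):ℤ) = _
  unfold V
  push_cast
  ring
end

section
/- Let x_j = (1, j, ..., j^p)' for j = −m, ..., m be the local polynomial design of degree p, Σ_d the covariance matrix of the process (1−L)^d ξ_t over the window, and K_d = diag(κ_d) with κ_d = Σ_d^{-1} 𝟙. If p ≤ d, then the weighted least squares estimator (X'K_dX)^{-1}X'K_d y equals the GLS estimator (X'Σ_d^{-1}X)^{-1}X'Σ_d^{-1} y for all y. -/
/-!
Let `A` be the monic polynomial of degree `2d` vanishing at the `d` integers on either side just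
outside the window `{-m, …, m}`. Since `γ_d(k) = (-1)^k C(2d, d+k)`, applying `Σ_d` to the window
values of a function `f` gives the centred difference `(-1)^d Δ^{2d} f(· - d)` as soon as `f`
vanishes at those outer integers, as `A·x^k` does. Hence `Σ_d` maps the window values of `A·x^k`
to those of a polynomial of degree exactly `k` (its leading coefficient is `±(2d+k)!/k!`), that
is, `Σ_d diag(A) X = X M` with `M` upper triangular and invertible. Transposing
`Σ_d⁻¹ X = diag(A) X M⁻¹` shows that GLS is WLS with kernel `A(j)`, and for `k = 0` the same
identity gives `Σ_d A = (-1)^d (2d)! 𝟙`, so `κ_d` is a nonzero multiple of `A(j)`.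
-/

open Matrix

/-- Autocovariance at lag `k` of the non-invertible MA(d) process `(1-L)^d ξ_t` with
unit-variance white noise. -/
noncomputable def maACV (d k : ℕ) : ℝ :=
  if k ≤ d then (-1 : ℝ) ^ k * ((2 * d).choose (d + k) : ℝ) else 0

namespace Matrix

variable {n q R : Type*} [Fintype n] [Fintype q] [DecidableEq q] [CommRing R]

noncomputable def wls (X : Matrix n q R) (W : Matrix n n R) (y : n → R) : q → R :=
  (Xᵀ * W * X)⁻¹ *ᵥ (Xᵀ *ᵥ (W *ᵥ y))

theorem wls_eq_of_transpose_mul_eq {X : Matrix n q R} {W W' : Matrix n n R} {B : Matrix q q R}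
    (hB : IsUnit B.det) (h : Xᵀ * W' = B * (Xᵀ * W)) (y : n → R) :
    wls X W' y = wls X W y := by
  have hG : Xᵀ * W' * X = B * (Xᵀ * W * X) := by rw [h, Matrix.mul_assoc]
  have hv : Xᵀ *ᵥ (W' *ᵥ y) = B *ᵥ (Xᵀ *ᵥ (W *ᵥ y)) := by simp only [mulVec_mulVec, h]
  rw [wls, wls, hG, hv, mul_inv_rev, ← mulVec_mulVec, mulVec_mulVec (M := B⁻¹),
    nonsing_inv_mul _ hB, one_mulVec]

theorem wls_smul {X : Matrix n q R} {W : Matrix n n R} {c : R} (hc : IsUnit c) (y : n → R) :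
    wls X (c • W) y = wls X W y :=
  wls_eq_of_transpose_mul_eq (B := c • 1) (by simpa using hc.pow _)
    (by rw [Matrix.mul_smul, Matrix.smul_mul, Matrix.one_mul]) y

theorem wls_inv_eq_wls_diagonal [DecidableEq n] {X : Matrix n q R} {S : Matrix n n R}
    {M : Matrix q q R} {a : n → R} (hS : IsUnit S.det) (hST : Sᵀ = S) (hM : IsUnit M.det)
    (h : S * (diagonal a * X) = X * M) (y : n → R) :
    wls X S⁻¹ y = wls X (diagonal a) y := by
  refine wls_eq_of_transpose_mul_eq (B := M⁻¹ᵀ)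
    (by simpa using isUnit_nonsing_inv_det M hM) ?_ y
  have hSX : S⁻¹ * X = diagonal a * X * M⁻¹ := by
    calc S⁻¹ * X = S⁻¹ * (X * M) * M⁻¹ := by
          rw [Matrix.mul_assoc, Matrix.mul_assoc, mul_nonsing_inv _ hM, Matrix.mul_one]
      _ = diagonal a * X * M⁻¹ := by
          rw [← h, ← Matrix.mul_assoc, nonsing_inv_mul _ hS, Matrix.one_mul]
  calc Xᵀ * S⁻¹ = (S⁻¹ * X)ᵀ := by rw [transpose_mul, transpose_nonsing_inv, hST]
    _ = M⁻¹ᵀ * (Xᵀ * diagonal a) := by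
      rw [hSX, transpose_mul, transpose_mul, diagonal_transpose]

theorem wls_diagonal_inv_mulVec_one_eq_wls_inv {K : Type*} [Field K] [DecidableEq n]
    {X : Matrix n q K} {S : Matrix n n K} {M : Matrix q q K} {a : n → K} {c : K} (hST : Sᵀ = S)
    (hM : IsUnit M.det) (h : S * (diagonal a * X) = X * M) (ha : S *ᵥ a = fun _ => c)
    (hc : c ≠ 0) (y : n → K) :
    wls X (diagonal (S⁻¹ *ᵥ fun _ => 1)) y = wls X S⁻¹ y := by
  by_cases hS : IsUnit S.det
  · have hκ : S⁻¹ *ᵥ (fun _ => 1) = c⁻¹ • a := by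
      have hone : (fun _ => (1 : K)) = c⁻¹ • (S *ᵥ a) := by
        funext; rw [ha, Pi.smul_apply, smul_eq_mul, inv_mul_cancel₀ hc]
      rw [hone, mulVec_smul, mulVec_mulVec, nonsing_inv_mul _ hS, one_mulVec]
    rw [hκ, diagonal_smul, wls_smul (inv_ne_zero hc).isUnit, wls_inv_eq_wls_diagonal hS hST hM h]
  · -- the junk value `S⁻¹ = 0` makes both weight matrices vanish
    rw [nonsing_inv_apply_not_isUnit _ hS, zero_mulVec]
    exact congrArg (wls X · y) diagonal_zero

end Matrix

namespace Polynomial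

variable {R : Type*} [CommRing R]

noncomputable def fwdDiffPoly (P : R[X]) : R[X] := taylor 1 P - P

theorem eval_fwdDiffPoly_iter (n : ℕ) (P : R[X]) (x : R) :
    (fwdDiffPoly^[n] P).eval x = (fwdDiff 1)^[n] P.eval x := by
  induction n generalizing x with
  | zero => rfl
  | succ n ih =>
    rw [Function.iterate_succ_apply', Function.iterate_succ_apply', fwdDiff, ← ih, ← ih]
    simp [fwdDiffPoly, taylor_apply, eval_comp, add_comm]

theorem natDegree_fwdDiffPoly_le (P : R[X]) : (fwdDiffPoly P).natDegree ≤ P.natDegree - 1 := by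
  rw [natDegree_le_iff_coeff_eq_zero]
  intro N hN
  rcases (show P.natDegree ≤ N by omega).eq_or_lt with hN | hN
  · subst hN
    rw [fwdDiffPoly, coeff_sub, ← natDegree_taylor P 1, coeff_natDegree, leadingCoeff_taylor,
      natDegree_taylor, coeff_natDegree, sub_self]
  · rw [fwdDiffPoly, coeff_sub, coeff_eq_zero_of_natDegree_lt hN,
      coeff_eq_zero_of_natDegree_lt (by rwa [natDegree_taylor]), sub_zero]

theorem natDegree_fwdDiffPoly_iter_le (n : ℕ) (P : R[X]) :
    (fwdDiffPoly^[n] P).natDegree ≤ P.natDegree - n := by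
  induction n with
  | zero => simp
  | succ n ih =>
    rw [Function.iterate_succ_apply']
    have := natDegree_fwdDiffPoly_le (fwdDiffPoly^[n] P)
    omega

theorem fwdDiff_iter_eval_of_natDegree_le {P : R[X]} {n : ℕ} (h : P.natDegree ≤ n) :
    (fwdDiff 1)^[n] P.eval = fun _ => P.coeff n * n.factorial := by
  rcases h.eq_or_lt with rfl | h
  · rw [fwdDiff_iter_degree_eq_factorial]
    rfl
  · rw [fwdDiff_iter_eq_zero_of_degree_lt h, coeff_eq_zero_of_natDegree_lt h]
    funext x
    simp

end Polynomial

namespace KernelGLS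

open Polynomial Finset

def node (m : ℕ) (i : Fin (2 * m + 1)) : ℝ := (i.val : ℝ) - m

noncomputable def maCov (m d : ℕ) : Matrix (Fin (2 * m + 1)) (Fin (2 * m + 1)) ℝ :=
  fun i j => maACV d ((i.val : ℤ) - j.val).natAbs

theorem maCov_transpose (m d : ℕ) : (maCov m d)ᵀ = maCov m d := by
  ext i j
  simp only [transpose_apply, maCov]
  rw [← Int.natAbs_neg, neg_sub]

theorem maACV_natAbs_sub {d s : ℕ} (hs : s ≤ 2 * d) :
    maACV d ((s : ℤ) - d).natAbs = (-1) ^ d * ((-1) ^ (2 * d - s) * (2 * d).choose s) := by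
  rw [maACV, if_pos (by omega), ← mul_assoc, ← pow_add, neg_one_pow_eq_pow_mod_two,
    neg_one_pow_eq_pow_mod_two (n := d + _)]
  congr 2
  · omega
  · rcases le_total s d with h | h
    · rw [← Nat.choose_symm hs]; congr 1; omega
    · congr 1; omega

theorem sum_maACV_mul_eq_fwdDiff_iter (d : ℕ) (f : ℝ → ℝ) (x : ℝ) :
    ∑ k ∈ Icc (-d : ℤ) d, maACV d k.natAbs * f (x + k) =
      (-1) ^ d * (fwdDiff 1)^[2 * d] f (x - d) := by
  rw [fwdDiff_iter_eq_sum_shift, mul_sum]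
  symm
  refine sum_nbij' (fun s => (s : ℤ) - d) (fun k => (k + d).toNat) ?_ ?_ ?_ ?_ ?_
  · intro s hs; simp only [mem_range] at hs; simp only [mem_Icc]; omega
  · intro k hk; simp only [mem_Icc] at hk; simp only [mem_range]; omega
  · intro s _; simp
  · intro k hk; simp only [mem_Icc] at hk; omega
  · intro s hs
    simp only [mem_range] at hs
    rw [maACV_natAbs_sub (by omega), zsmul_eq_mul]
    push_cast
    ring_nf

theorem maCov_mulVec_apply {m d : ℕ} {f : ℝ → ℝ}
    (hf : ∀ x : ℤ, m < x.natAbs → x.natAbs ≤ m + d → f x = 0) (i : Fin (2 * m + 1)) :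
    (maCov m d *ᵥ fun j => f (node m j)) i = (-1) ^ d * (fwdDiff 1)^[2 * d] f (node m i - d) := by
  -- only lags `|k| ≤ d` contribute, and the zeros of `f` kill the lags that leave the window
  rw [← sum_maACV_mul_eq_fwdDiff_iter]
  have hterm : ∀ j : Fin (2 * m + 1), maCov m d i j * f (node m j) =
      maACV d ((j : ℤ) - i).natAbs * f (node m i + (((j : ℤ) - i : ℤ) : ℝ)) := by
    intro j
    rw [maCov, ← Int.natAbs_neg, neg_sub]
    congr 2
    simp only [node]; push_cast; ring
  simp only [mulVec, dotProduct]
  refine sum_bij_ne_zero (fun j _ _ => (j : ℤ) - i) ?_ ?_ ?_ ?_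
  · intro j _ hj
    have : ((i : ℤ) - j).natAbs ≤ d := by
      by_contra h
      exact hj (by simp only [maCov, maACV, if_neg h, zero_mul])
    simp only [mem_Icc]
    omega
  · intro j₁ _ _ j₂ _ _ h
    exact Fin.ext (by omega)
  · intro k hk hne
    simp only [mem_Icc] at hk
    have hin : 0 ≤ (i : ℤ) + k ∧ (i : ℤ) + k < 2 * m + 1 := by
      by_contra hout
      apply hne
      have := hf ((i : ℤ) + k - m) (by omega) (by omega)
      rw [show node m i + (k : ℝ) = (((i : ℤ) + k - m : ℤ) : ℝ) by
        simp only [node]; push_cast; ring, this, mul_zero]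
    have hk : (((i : ℤ) + k).toNat : ℤ) - i = k := by omega
    exact ⟨⟨((i : ℤ) + k).toNat, by omega⟩, mem_univ _, by rwa [hterm, hk], hk⟩
  · intro j _ _
    exact hterm j

noncomputable def outerNodePoly (m d : ℕ) : ℝ[X] :=
  ∏ r ∈ range d, (X ^ 2 - C (((m + r + 1 : ℕ) : ℝ) ^ 2))

theorem monic_outerNodePoly (m d : ℕ) : (outerNodePoly m d).Monic :=
  monic_prod_of_monic _ _ fun _ _ => monic_X_pow_sub_C _ two_ne_zero

theorem natDegree_outerNodePoly (m d : ℕ) : (outerNodePoly m d).natDegree = 2 * d := by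
  rw [outerNodePoly, natDegree_prod_of_monic _ _ fun _ _ => monic_X_pow_sub_C _ two_ne_zero,
    sum_congr rfl fun _ _ => natDegree_X_pow_sub_C, sum_const, card_range, smul_eq_mul,
    mul_comm]

theorem eval_outerNodePoly_eq_zero {m d : ℕ} {x : ℤ} (h₁ : m < x.natAbs)
    (h₂ : x.natAbs ≤ m + d) :
    (outerNodePoly m d).eval (x : ℝ) = 0 := by
  rw [outerNodePoly, eval_prod]
  refine prod_eq_zero (i := x.natAbs - m - 1) (mem_range.mpr (by omega)) ?_
  rw [show m + (x.natAbs - m - 1) + 1 = x.natAbs by omega, Nat.cast_natAbs, Int.cast_abs]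
  simp

theorem maCov_mulVec_eval_outerNodePoly (m d : ℕ) :
    maCov m d *ᵥ (fun j => (outerNodePoly m d).eval (node m j)) =
      fun _ => (-1) ^ d * ((2 * d).factorial : ℝ) := by
  funext i
  rw [maCov_mulVec_apply (f := (outerNodePoly m d).eval)
      (fun _ h₁ h₂ => eval_outerNodePoly_eq_zero h₁ h₂), ← natDegree_outerNodePoly m d,
    fwdDiff_iter_eval_of_natDegree_le le_rfl,
    coeff_natDegree, (monic_outerNodePoly m d).leadingCoeff, one_mul]

theorem monic_outerNodePoly_mul_X_pow (m d k : ℕ) : (outerNodePoly m d * X ^ k).Monic :=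
  (monic_outerNodePoly m d).mul (monic_X_pow k)

theorem natDegree_outerNodePoly_mul_X_pow (m d k : ℕ) :
    (outerNodePoly m d * X ^ k).natDegree = 2 * d + k := by
  rw [(monic_outerNodePoly m d).natDegree_mul (monic_X_pow k), natDegree_outerNodePoly,
    natDegree_X_pow]

noncomputable def convPoly (m d k : ℕ) : ℝ[X] :=
  C ((-1) ^ d) * (fwdDiffPoly^[2 * d] (outerNodePoly m d * X ^ k)).comp (X - C (d : ℝ))

theorem eval_convPoly (m d k : ℕ) (x : ℝ) :
    (convPoly m d k).eval x =
      (-1) ^ d * (fwdDiff 1)^[2 * d] (outerNodePoly m d * X ^ k).eval (x - d) := by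
  rw [convPoly, eval_mul, eval_C, eval_comp, eval_sub, eval_X, eval_C, eval_fwdDiffPoly_iter]

theorem natDegree_convPoly_le (m d k : ℕ) : (convPoly m d k).natDegree ≤ k := by
  have hdiff := natDegree_fwdDiffPoly_iter_le (2 * d) (outerNodePoly m d * X ^ k)
  rw [natDegree_outerNodePoly_mul_X_pow] at hdiff
  refine (natDegree_C_mul_le _ _).trans (natDegree_comp_le.trans ?_)
  rw [natDegree_X_sub_C, mul_one]
  omega

theorem coeff_convPoly_self_mul_factorial (m d k : ℕ) :
    (convPoly m d k).coeff k * k.factorial = (-1) ^ d * (2 * d + k).factorial := by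
  set F := outerNodePoly m d * X ^ k
  have hF : F.coeff (k + 2 * d) = 1 := by
    rw [add_comm, ← natDegree_outerNodePoly_mul_X_pow m d k]
    exact monic_outerNodePoly_mul_X_pow m d k
  have heval : (convPoly m d k).eval =
      (-1 : ℝ) ^ d • fun x => ((fwdDiff 1)^[2 * d] F.eval) (x + -d) := by
    funext x
    rw [eval_convPoly, Pi.smul_apply, smul_eq_mul, sub_eq_add_neg]
  have h := congrFun (fwdDiff_iter_eval_of_natDegree_le (natDegree_convPoly_le m d k)) 0
  rw [heval, fwdDiff_iter_const_smul, Pi.smul_apply, fwdDiff_iter_comp_add,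
    ← Function.iterate_add_apply,
    fwdDiff_iter_eval_of_natDegree_le (n := k + 2 * d)
      (by rw [natDegree_outerNodePoly_mul_X_pow, add_comm]),
    hF, one_mul, smul_eq_mul, add_comm k] at h
  exact h.symm

noncomputable def convMatrix (m p d : ℕ) : Matrix (Fin (p + 1)) (Fin (p + 1)) ℝ :=
  fun l k => (convPoly m d k).coeff l

theorem isUnit_det_convMatrix (m p d : ℕ) : IsUnit (convMatrix m p d).det := by
  have htri : (convMatrix m p d).IsUpperTriangular := fun l k hkl =>
    coeff_eq_zero_of_natDegree_lt ((natDegree_convPoly_le m d k).trans_lt hkl)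
  rw [det_of_isUpperTriangular htri, isUnit_iff_ne_zero, prod_ne_zero_iff]
  intro k _ hk
  have h := coeff_convPoly_self_mul_factorial m d k
  rw [show (convPoly m d k).coeff k = 0 from hk, zero_mul] at h
  exact mul_ne_zero (pow_ne_zero _ (neg_ne_zero.mpr one_ne_zero)) (Nat.cast_ne_zero.mpr
    (Nat.factorial_ne_zero _)) h.symm

def design (m p : ℕ) : Matrix (Fin (2 * m + 1)) (Fin (p + 1)) ℝ :=
  fun i k => node m i ^ k.val

theorem maCov_mul_diagonal_mul_design (m p d : ℕ) :
    maCov m d * (diagonal (fun j => (outerNodePoly m d).eval (node m j)) * design m p) =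
      design m p * convMatrix m p d := by
  ext i k
  have hroot (x : ℤ) (h₁ : m < x.natAbs) (h₂ : x.natAbs ≤ m + d) :
      (outerNodePoly m d * X ^ k.val).eval (x : ℝ) = 0 := by
    rw [eval_mul, eval_outerNodePoly_eq_zero h₁ h₂, zero_mul]
  calc _ = (maCov m d *ᵥ fun j => (outerNodePoly m d * X ^ k.val).eval (node m j)) i := by
        rw [mul_apply]
        simp only [mulVec, dotProduct, diagonal_mul, design, eval_mul, eval_pow, eval_X]
    _ = (convPoly m d k).eval (node m i) :=
        (maCov_mulVec_apply hroot i).trans (eval_convPoly m d k _).symm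
    _ = _ := by
        rw [eval_eq_sum_range' (n := p + 1) ((natDegree_convPoly_le m d k).trans_lt (by omega)),
          mul_apply, ← Fin.sum_univ_eq_sum_range]
        simp only [design, convMatrix, mul_comm]

end KernelGLS

theorem kernel_GLS_equivalence_general (m p d : ℕ) :
    let X : Matrix (Fin (2 * m + 1)) (Fin (p + 1)) ℝ :=
      fun i k => ((i.val : ℝ) - (m : ℝ)) ^ (k.val)
    let Sigd : Matrix (Fin (2 * m + 1)) (Fin (2 * m + 1)) ℝ :=
      fun i j => maACV d ((i.val : ℤ) - j.val).natAbs
    let kapd : Fin (2 * m + 1) → ℝ := Sigd⁻¹ *ᵥ (fun _ => 1)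
    let Kd : Matrix (Fin (2 * m + 1)) (Fin (2 * m + 1)) ℝ := Matrix.diagonal kapd
    ∀ y : Fin (2 * m + 1) → ℝ,
      (Xᵀ * Kd * X)⁻¹ *ᵥ (Xᵀ *ᵥ (Kd *ᵥ y))
        = (Xᵀ * Sigd⁻¹ * X)⁻¹ *ᵥ (Xᵀ *ᵥ (Sigd⁻¹ *ᵥ y)) := by
  intro X Sigd kapd Kd y
  exact Matrix.wls_diagonal_inv_mulVec_one_eq_wls_inv (KernelGLS.maCov_transpose m d)
    (KernelGLS.isUnit_det_convMatrix m p d) (KernelGLS.maCov_mul_diagonal_mul_design m p d)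
    (KernelGLS.maCov_mulVec_eval_outerNodePoly m d) (by positivity) y

/-- Kernel–GLS equivalence (Luati–Proietti): for the local polynomial design of degree
`p ≤ d`, weighted least squares with the row-sum kernel `κ_d = Σ_d⁻¹ 𝟙` coincides with
GLS under the covariance `Σ_d` of the non-invertible MA(d) process. -/
theorem kernel_GLS_equivalence (m p d : ℕ) (hm : 1 ≤ m) (hpd : p ≤ d) :
    let X : Matrix (Fin (2 * m + 1)) (Fin (p + 1)) ℝ :=
      fun i k => ((i.val : ℝ) - (m : ℝ)) ^ (k.val)
    let Sigd : Matrix (Fin (2 * m + 1)) (Fin (2 * m + 1)) ℝ :=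
      fun i j => maACV d ((i.val : ℤ) - j.val).natAbs
    let kapd : Fin (2 * m + 1) → ℝ := Sigd⁻¹ *ᵥ (fun _ => 1)
    let Kd : Matrix (Fin (2 * m + 1)) (Fin (2 * m + 1)) ℝ := Matrix.diagonal kapd
    ∀ y : Fin (2 * m + 1) → ℝ,
      (Xᵀ * Kd * X)⁻¹ *ᵥ (Xᵀ *ᵥ (Kd *ᵥ y))
        = (Xᵀ * Sigd⁻¹ * X)⁻¹ *ᵥ (Xᵀ *ᵥ (Sigd⁻¹ *ᵥ y)) :=
  kernel_GLS_equivalence_general m p d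
end
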